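/- arXiv:2602.21687 — 10 statements merged into one kernel-verified Lean document; each statement's English description precedes it below -/
import Mathlib

section
/- For every positive integer n, there exists a top-balanced permutation sequence of length n; that is, there exist permutations σ_1, …, σ_n of {1, …, n} such that for every day t ∈ {1, …, n} and every player i ∈ {1, …, n}, at least one of the items σ_1(i), …, σ_t(i) is at most ⌈n/t⌉. -/
open Finset

/-!
Serve the players greedily: each day hand out the items in order, the players whose best item so
far is worst being served first. Then after `t` days at least `min n (t * v)` players own one of the
top `v` items, for every `v`: if some player who already owned one receives another today, every
player served after him owns one too; otherwise the `v` players served first today are all new.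
Taking `v = ⌈n / t⌉` gives `t * v ≥ n`, so every player owns one of the top `⌈n / t⌉` items.
-/

section DescRank

variable {α : Type*} [LinearOrder α] {n : ℕ}

/-- The position of `i` when the values of `f` are listed in decreasing order. -/
def descRank (f : Fin n → α) : Equiv.Perm (Fin n) :=
  (Tuple.sort (OrderDual.toDual ∘ f))⁻¹

theorem le_of_descRank_le (f : Fin n → α) {i j : Fin n} (h : descRank f i ≤ descRank f j) :
    f j ≤ f i := by
  have := Tuple.monotone_sort (OrderDual.toDual ∘ f) h
  simpa [descRank] using this

end DescRank

theorem card_filter_perm_val_lt {n : ℕ} (e : Equiv.Perm (Fin n)) (v : ℕ) :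
    #{i | (e i : ℕ) < v} = min n v := by
  rw [← Fin.card_filter_val_lt]
  exact card_equiv e (by simp)

/-- `greedyBest n t i` is the best (0-indexed) item player `i` received during the first `t` days,
or `n` if `t = 0`; each day the items are handed out in decreasing order of the players' current
best. -/
def greedyBest (n : ℕ) : ℕ → Fin n → ℕ
  | 0 => fun _ => n
  | t + 1 => fun i => min (greedyBest n t i) (descRank (greedyBest n t) i)

namespace greedyBest

variable {n : ℕ}

theorem succ_apply (t : ℕ) (i : Fin n) :
    greedyBest n (t + 1) i = min (greedyBest n t i) (descRank (greedyBest n t) i) := rfl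

theorem min_mul_le_card (t v : ℕ) : min n (t * v) ≤ #{i | greedyBest n t i < v} := by
  induction t with
  | zero => simp
  | succ t ih =>
    set F : Finset (Fin n) := {i | greedyBest n t i < v}
    set G : Finset (Fin n) := {i | (descRank (greedyBest n t) i : ℕ) < v}
    have hsplit : ({i | greedyBest n (t + 1) i < v} : Finset (Fin n)) = F ∪ G := by
      ext i; simp [F, G, succ_apply]
    rw [hsplit]
    by_cases hFG : Disjoint F G
    · rw [card_union_of_disjoint hFG, card_filter_perm_val_lt, Nat.succ_mul]
      omega
    · obtain ⟨i, hiF, hiG⟩ := not_disjoint_iff.mp hFG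
      simp only [F, G, mem_filter, mem_univ, true_and] at hiF hiG
      have hunion : F ∪ G = univ := by
        refine eq_univ_of_forall fun j => ?_
        by_cases hj : (descRank (greedyBest n t) j : ℕ) < v
        · exact mem_union_right _ (by simpa [G] using hj)
        · have hij : descRank (greedyBest n t) i ≤ descRank (greedyBest n t) j := by
            rw [Fin.le_iff_val_le_val]
            omega
          have hji := le_of_descRank_le _ hij
          exact mem_union_left _ (by simp only [F, mem_filter, mem_univ, true_and]; omega)
      simp [hunion]

theorem lt_of_le_mul {t v : ℕ} (h : n ≤ t * v) (i : Fin n) : greedyBest n t i < v := by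
  have hcard := min_mul_le_card (n := n) t v
  rw [min_eq_left h] at hcard
  have hall : #{i | greedyBest n t i < v} = #(univ : Finset (Fin n)) :=
    le_antisymm (card_filter_le _ _) (by simpa using hcard)
  exact card_filter_eq_iff.mp hall i (mem_univ i)

theorem exists_descRank_lt {t v : ℕ} {i : Fin n} (h : greedyBest n t i < v) (hv : v ≤ n) :
    ∃ s < t, (descRank (greedyBest n s) i : ℕ) < v := by
  induction t with
  | zero =>
    change n < v at h
    omega
  | succ t ih =>
    rcases min_lt_iff.mp h with h | h
    · obtain ⟨s, hs, hsi⟩ := ih h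
      exact ⟨s, by omega, hsi⟩
    · exact ⟨t, by omega, h⟩

end greedyBest

section CeilDiv

variable {K : Type*} [Field K] [LinearOrder K] [IsStrictOrderedRing K] [FloorSemiring K]

theorem natCeil_div_le_self (n : ℕ) {t : ℕ} (ht : 1 ≤ t) : ⌈(n : K) / t⌉₊ ≤ n :=
  Nat.ceil_le.mpr (div_le_self (by positivity) (by exact_mod_cast ht))

theorem le_mul_natCeil_div (n : ℕ) {t : ℕ} (ht : 0 < t) : n ≤ t * ⌈(n : K) / t⌉₊ := by
  have h := Nat.le_ceil ((n : K) / t)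
  rw [div_le_iff₀ (by positivity)] at h
  exact_mod_cast (by linarith : (n : K) ≤ t * ⌈(n : K) / t⌉₊)

end CeilDiv

theorem exists_top_balanced_sequence_general (n : ℕ) :
    ∃ σ : Fin n → Equiv.Perm (Fin n),
      ∀ t ∈ Finset.Icc 1 n, ∀ i : Fin n,
        ∃ s : Fin n, (s : ℕ) < t ∧
          (((σ s i : ℕ) + 1 : ℤ) ≤ ⌈(n : ℚ) / (t : ℚ)⌉) := by
  refine ⟨fun s => descRank (greedyBest n s), fun t ht i => ?_⟩
  obtain ⟨ht1, htn⟩ := mem_Icc.mp ht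
  obtain ⟨s, hst, hs⟩ := greedyBest.exists_descRank_lt
    (greedyBest.lt_of_le_mul (le_mul_natCeil_div (K := ℚ) n ht1) i)
    (natCeil_div_le_self (K := ℚ) n ht1)
  refine ⟨⟨s, by omega⟩, hst, ?_⟩
  change ((descRank (greedyBest n s) i : ℕ) + 1 : ℤ) ≤ _
  rw [← Int.natCast_ceil_eq_ceil (by positivity)]
  omega

/-- For every positive integer `n` there is a *top-balanced* permutation sequence
`σ_1, …, σ_n` of `{1,…,n}`: for every day `t ∈ {1,…,n}` and every player `i`, at least
one of the items assigned to `i` in the first `t` days (item assigned on day `s` has rank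
`(σ s i : ℕ) + 1`) is at most `⌈n/t⌉`. -/
theorem exists_top_balanced_sequence (n : ℕ) (hn : 0 < n) :
    ∃ σ : Fin n → Equiv.Perm (Fin n),
      ∀ t ∈ Finset.Icc 1 n, ∀ i : Fin n,
        ∃ s : Fin n, (s : ℕ) < t ∧
          (((σ s i : ℕ) + 1 : ℤ) ≤ ⌈(n : ℚ) / (t : ℚ)⌉) :=
  exists_top_balanced_sequence_general n
end

section
/- If a permutation sequence σ_1, …, σ_n of length n is balanced, then it forms a Latin square in the following sense: for every player i, the map t ↦ σ_t(i) is a bijection of {1, …, n}, i.e., after n days each player has received each item exactly once. -/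
/-!
Count, for a player `i` and a rank bound `r ≤ n`, the days on which `i` receives one of the `r`
best items. Balancedness at `t = n` says this count is at least `r`. On the other hand each day
is a permutation, so exactly `r` players get one of the `r` best items that day, and the counts
of all `n` players add up to exactly `n * r`. Hence every count equals `r`, and comparing the
counts for `k` and `k + 1` yields a day on which player `i` receives item `k`.
-/

/-- `BalancedSeq n σ` : the permutation sequence `σ_1, …, σ_n` (day `s : Fin n`, player `i`)
is balanced: for every player `i`, every day `t ∈ {1,…,n}` and every `j ∈ {1,…,t}`,
the `j`-th smallest of the items received in the first `t` days is at most `⌈j·n/t⌉`;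
equivalently, in the first `t` days player `i` receives at least `j` items from among
items `1, …, ⌈j·n/t⌉` (item assigned on day `s` has rank `(σ s i : ℕ) + 1 ∈ {1,…,n}`). -/
def BalancedSeq (n : ℕ) (σ : Fin n → Equiv.Perm (Fin n)) : Prop :=
  ∀ i : Fin n, ∀ t ∈ Finset.Icc 1 n, ∀ j ∈ Finset.Icc 1 t,
    j ≤ (Finset.univ.filter (fun s : Fin n => (s : ℕ) < t ∧
        (((σ s i : ℕ) + 1 : ℤ) ≤ ⌈((j * n : ℕ) : ℚ) / (t : ℚ)⌉))).card

open Finset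

lemma Equiv.Perm.card_filter_val_lt {n : ℕ} (p : Equiv.Perm (Fin n)) {r : ℕ} (hr : r ≤ n) :
    #{i | (p i : ℕ) < r} = r := by
  rw [card_equiv p (t := {v : Fin n | (v : ℕ) < r}) (by simp), Fin.card_filter_val_lt,
    min_eq_right hr]

lemma sum_card_filter_perm_val_lt {D : Type*} [Fintype D] {n : ℕ} (σ : D → Equiv.Perm (Fin n))
    {r : ℕ} (hr : r ≤ n) :
    ∑ i : Fin n, #{s | (σ s i : ℕ) < r} = Fintype.card D * r := by
  simp only [card_filter]
  rw [sum_comm]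
  simp [(σ _).card_filter_val_lt hr]

lemma Function.surjective_of_card_filter_val_lt {α : Type*} [Fintype α] {n : ℕ}
    (f : α → Fin n) (hf : ∀ r ≤ n, #{a | (f a : ℕ) < r} = r) : Function.Surjective f := by
  intro k
  have hlt : #{a | (f a : ℕ) < k} < #{a | (f a : ℕ) < k + 1} := by
    rw [hf k k.2.le, hf (k + 1) k.2]
    exact Nat.lt_add_one k
  obtain ⟨a, ha, ha'⟩ := exists_mem_notMem_of_card_lt_card hlt
  simp only [mem_filter, mem_univ, true_and, not_lt] at ha ha'
  exact ⟨a, Fin.ext (by omega)⟩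

namespace BalancedSeq

variable {n : ℕ} {σ : Fin n → Equiv.Perm (Fin n)}

lemma le_card_filter_val_lt (h : BalancedSeq n σ) (i : Fin n) {r : ℕ} (hr : r ≤ n) :
    r ≤ #{s | (σ s i : ℕ) < r} := by
  rcases Nat.eq_zero_or_pos r with rfl | hr₀
  · exact Nat.zero_le _
  have hceil : ⌈((r * n : ℕ) : ℚ) / (n : ℚ)⌉ = (r : ℤ) := by
    have hn : (n : ℚ) ≠ 0 := by exact_mod_cast (by omega : n ≠ 0)
    rw [Nat.cast_mul, mul_div_cancel_right₀ _ hn, Int.ceil_natCast]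
  refine (h i n (mem_Icc.mpr ⟨by omega, le_rfl⟩) r (mem_Icc.mpr ⟨hr₀, hr⟩)).trans
    (card_le_card fun s hs => ?_)
  simp only [hceil, mem_filter, mem_univ, true_and] at hs ⊢
  omega

lemma card_filter_val_lt (h : BalancedSeq n σ) (i : Fin n) {r : ℕ} (hr : r ≤ n) :
    #{s | (σ s i : ℕ) < r} = r := by
  have hsum : ∑ _j : Fin n, r = ∑ j : Fin n, #{s | (σ s j : ℕ) < r} := by
    rw [sum_card_filter_perm_val_lt σ hr, sum_const, card_univ, smul_eq_mul]
  exact ((sum_eq_sum_iff_of_le fun j _ => h.le_card_filter_val_lt j hr).mp hsum i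
    (mem_univ i)).symm

end BalancedSeq

/-- A balanced permutation sequence forms a Latin square: for every player `i`, the map
sending each day `t` to the item `σ_t(i)` received on that day is a bijection of the items,
i.e. after `n` days each player has received each item exactly once. -/
theorem balanced_isLatinSquare (n : ℕ) (σ : Fin n → Equiv.Perm (Fin n))
    (h : BalancedSeq n σ) :
    ∀ i : Fin n, Function.Bijective (fun t : Fin n => σ t i) := fun i =>
  (Function.surjective_of_card_filter_val_lt _ fun _ hr =>
    h.card_filter_val_lt i hr).bijective_of_finite
end

section
/- For every positive integer n with n ≤ 11, there exists a balanced permutation sequence of length n. -/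
theorem natCast_add_one_le_ceil_div_iff {α : Type*} [Field α] [LinearOrder α]
    [IsStrictOrderedRing α] [FloorRing α] (x a t : ℕ) (ht : 0 < t) :
    (x : ℤ) + 1 ≤ ⌈(a : α) / t⌉ ↔ x * t < a := by
  rw [Int.add_one_le_iff, Int.lt_ceil, lt_div_iff₀ (by exact_mod_cast ht)]
  exact_mod_cast Iff.rfl

/-- The balance condition for a table whose row `s` lists the items, numbered from `0`, that
players `0, …, n - 1` receive on day `s`. -/
def IsBalancedTable (n : ℕ) (a : Fin n → Fin n → Fin n) : Prop :=
  ∀ i : Fin n, ∀ t ∈ Finset.Icc 1 n, ∀ j ∈ Finset.Icc 1 t,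
    j ≤ (Finset.univ.filter (fun s : Fin n => (s : ℕ) < t ∧ (a s i : ℕ) * t < j * n)).card

instance (n : ℕ) (a : Fin n → Fin n → Fin n) : Decidable (IsBalancedTable n a) := by
  unfold IsBalancedTable; infer_instance

theorem balancedSeq_iff_isBalancedTable (n : ℕ) (σ : Fin n → Equiv.Perm (Fin n)) :
    BalancedSeq n σ ↔ IsBalancedTable n fun s => σ s := by
  refine forall_congr' fun i => forall₂_congr fun t ht => forall₂_congr fun j _ => ?_
  have ht : 0 < t := (Finset.mem_Icc.mp ht).1
  simp only [natCast_add_one_le_ceil_div_iff _ _ _ ht]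

theorem exists_balancedSeq_of_table {n : ℕ} (a : Fin n → Fin n → Fin n)
    (ha : ∀ s, Function.Injective (a s)) (hbal : IsBalancedTable n a) :
    ∃ σ : Fin n → Equiv.Perm (Fin n), BalancedSeq n σ :=
  ⟨fun s => Equiv.ofBijective (a s) (Finite.injective_iff_bijective.mp (ha s)),
    (balancedSeq_iff_isBalancedTable n _).mpr hbal⟩

theorem exists_balancedSeq_one : ∃ σ : Fin 1 → Equiv.Perm (Fin 1), BalancedSeq 1 σ :=
  exists_balancedSeq_of_table
    ![![0]]
    (by decide) (by decide)

theorem exists_balancedSeq_two : ∃ σ : Fin 2 → Equiv.Perm (Fin 2), BalancedSeq 2 σ :=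
  exists_balancedSeq_of_table
    ![![0, 1],
      ![1, 0]]
    (by decide) (by decide)

theorem exists_balancedSeq_three : ∃ σ : Fin 3 → Equiv.Perm (Fin 3), BalancedSeq 3 σ :=
  exists_balancedSeq_of_table
    ![![0, 2, 1],
      ![1, 0, 2],
      ![2, 1, 0]]
    (by decide) (by decide)

theorem exists_balancedSeq_four : ∃ σ : Fin 4 → Equiv.Perm (Fin 4), BalancedSeq 4 σ :=
  exists_balancedSeq_of_table
    ![![2, 0, 1, 3],
      ![0, 2, 3, 1],
      ![1, 3, 2, 0],
      ![3, 1, 0, 2]]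
    (by decide) (by decide)

theorem exists_balancedSeq_five : ∃ σ : Fin 5 → Equiv.Perm (Fin 5), BalancedSeq 5 σ :=
  exists_balancedSeq_of_table
    ![![2, 0, 1, 4, 3],
      ![4, 3, 2, 1, 0],
      ![0, 2, 4, 3, 1],
      ![3, 1, 0, 2, 4],
      ![1, 4, 3, 0, 2]]
    (by decide) (by decide)

theorem exists_balancedSeq_six : ∃ σ : Fin 6 → Equiv.Perm (Fin 6), BalancedSeq 6 σ :=
  exists_balancedSeq_of_table
    ![![4, 0, 5, 3, 2, 1],
      ![0, 5, 2, 1, 4, 3],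
      ![2, 3, 0, 5, 1, 4],
      ![3, 1, 4, 0, 5, 2],
      ![5, 2, 1, 4, 3, 0],
      ![1, 4, 3, 2, 0, 5]]
    (by decide) (by decide)

theorem exists_balancedSeq_seven : ∃ σ : Fin 7 → Equiv.Perm (Fin 7), BalancedSeq 7 σ :=
  exists_balancedSeq_of_table
    ![![4, 5, 2, 6, 1, 0, 3],
      ![1, 0, 6, 2, 5, 3, 4],
      ![5, 2, 4, 1, 3, 6, 0],
      ![3, 1, 0, 5, 4, 2, 6],
      ![2, 6, 5, 3, 0, 4, 1],
      ![0, 3, 1, 4, 6, 5, 2],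
      ![6, 4, 3, 0, 2, 1, 5]]
    (by decide) (by decide)

theorem exists_balancedSeq_eight : ∃ σ : Fin 8 → Equiv.Perm (Fin 8), BalancedSeq 8 σ :=
  exists_balancedSeq_of_table
    ![![4, 1, 7, 2, 3, 0, 5, 6],
      ![3, 4, 2, 6, 7, 5, 0, 1],
      ![0, 7, 5, 4, 1, 3, 6, 2],
      ![6, 2, 0, 1, 4, 7, 3, 5],
      ![1, 6, 3, 7, 5, 2, 4, 0],
      ![5, 0, 6, 3, 2, 4, 1, 7],
      ![2, 5, 4, 0, 6, 1, 7, 3],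
      ![7, 3, 1, 5, 0, 6, 2, 4]]
    (by decide) (by decide)

theorem exists_balancedSeq_nine : ∃ σ : Fin 9 → Equiv.Perm (Fin 9), BalancedSeq 9 σ :=
  exists_balancedSeq_of_table
    ![![7, 6, 1, 4, 8, 2, 0, 3, 5],
      ![1, 4, 3, 6, 2, 7, 5, 8, 0],
      ![3, 1, 6, 0, 5, 4, 8, 2, 7],
      ![6, 7, 4, 8, 1, 0, 2, 5, 3],
      ![0, 2, 8, 3, 7, 5, 4, 1, 6],
      ![4, 5, 0, 1, 3, 8, 7, 6, 2],
      ![5, 0, 7, 2, 6, 1, 3, 4, 8],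
      ![8, 3, 2, 5, 0, 6, 1, 7, 4],
      ![2, 8, 5, 7, 4, 3, 6, 0, 1]]
    (by decide) (by decide)

theorem exists_balancedSeq_ten : ∃ σ : Fin 10 → Equiv.Perm (Fin 10), BalancedSeq 10 σ :=
  exists_balancedSeq_of_table
    ![![8, 7, 5, 1, 4, 9, 3, 0, 6, 2],
      ![1, 0, 2, 8, 7, 4, 5, 6, 3, 9],
      ![5, 4, 7, 3, 1, 2, 9, 8, 0, 6],
      ![3, 8, 0, 7, 9, 6, 1, 2, 5, 4],
      ![7, 3, 8, 5, 2, 1, 6, 4, 9, 0],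
      ![4, 6, 3, 0, 5, 8, 2, 9, 1, 7],
      ![2, 1, 9, 4, 6, 0, 7, 5, 8, 3],
      ![9, 5, 1, 6, 0, 7, 4, 3, 2, 8],
      ![0, 9, 6, 2, 3, 5, 8, 7, 4, 1],
      ![6, 2, 4, 9, 8, 3, 0, 1, 7, 5]]
    (by decide) (by decide)

theorem exists_balancedSeq_eleven : ∃ σ : Fin 11 → Equiv.Perm (Fin 11), BalancedSeq 11 σ :=
  exists_balancedSeq_of_table
    ![![8, 5, 9, 0, 2, 7, 1, 4, 6, 3, 10],
      ![4, 7, 5, 9, 10, 3, 8, 6, 1, 2, 0],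
      ![3, 2, 0, 6, 4, 8, 5, 1, 10, 9, 7],
      ![2, 4, 6, 3, 7, 0, 10, 9, 5, 8, 1],
      ![9, 10, 2, 8, 1, 6, 3, 7, 4, 0, 5],
      ![1, 0, 10, 5, 9, 4, 7, 3, 2, 6, 8],
      ![6, 9, 4, 2, 5, 10, 0, 8, 7, 1, 3],
      ![10, 3, 8, 7, 0, 1, 4, 2, 9, 5, 6],
      ![0, 8, 1, 4, 6, 5, 9, 10, 3, 7, 2],
      ![5, 1, 7, 10, 3, 2, 6, 0, 8, 4, 9],
      ![7, 6, 3, 1, 8, 9, 2, 5, 0, 10, 4]]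
    (by decide) (by decide)

theorem exists_balanced_sequence_of_le_eleven_general (n : ℕ) (hn' : n ≤ 11) :
    ∃ σ : Fin n → Equiv.Perm (Fin n), BalancedSeq n σ := by
  interval_cases n
  · exact exists_balancedSeq_of_table ![] (by decide) (by decide)
  · exact exists_balancedSeq_one
  · exact exists_balancedSeq_two
  · exact exists_balancedSeq_three
  · exact exists_balancedSeq_four
  · exact exists_balancedSeq_five
  · exact exists_balancedSeq_six
  · exact exists_balancedSeq_seven
  · exact exists_balancedSeq_eight
  · exact exists_balancedSeq_nine
  · exact exists_balancedSeq_ten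
  · exact exists_balancedSeq_eleven

/-- For every positive integer `n ≤ 11` there exists a balanced permutation sequence of
length `n`. -/
theorem exists_balanced_sequence_of_le_eleven (n : ℕ) (hn : 0 < n) (hn' : n ≤ 11) :
    ∃ σ : Fin n → Equiv.Perm (Fin n), BalancedSeq n σ :=
  exists_balanced_sequence_of_le_eleven_general n hn'
end

section
/- For every integer k ≥ 2, there is no balanced permutation sequence of length n = 6k. -/
/-!
Only the first four days matter. Write `c_i(t, m)` (`countBelow σ i t m`) for the number of the
first `t` days on which player `i` receives one of the `m` best items, and let
`q = ⌈3k/2⌉ = ⌈n/4⌉`. Balancedness at `(t, j) = (2, 1), (3, 1), (4, 1), (4, 2)` forces,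
for every player, `c_i(2, q) + 3 ≤ c_i(2, 2k) + c_i(3, q) + c_i(4, 3k)`.
Since every day is a permutation, `∑_i c_i(t, m) = t m`, so summing over the `6k` players gives
`2q + 18k ≤ 4k + 3q + 12k`, i.e. `q ≥ 2k`, which fails for `k ≥ 2`.
-/

open Finset

section

variable {n : ℕ} (σ : Fin n → Equiv.Perm (Fin n))

def countBelow (i : Fin n) (t m : ℕ) : ℕ :=
  #{s : Fin n | (s : ℕ) < t ∧ (σ s i : ℕ) < m}

theorem countBelow_mono (i : Fin n) {t t' m m' : ℕ} (ht : t ≤ t') (hm : m ≤ m') :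
    countBelow σ i t m ≤ countBelow σ i t' m' :=
  card_le_card fun s => by simp only [mem_filter, mem_univ, true_and]; omega

theorem countBelow_add_countBelow_le (i : Fin n) {t t' m m' : ℕ} (ht : t ≤ t') (hm : m ≤ m') :
    countBelow σ i t' m + countBelow σ i t m' ≤
      countBelow σ i t' m' + countBelow σ i t m := by
  rw [countBelow, countBelow, ← card_union_add_card_inter]
  refine add_le_add (card_le_card fun s => ?_) (card_le_card fun s => ?_) <;>
    simp only [mem_union, mem_inter, mem_filter, mem_univ, true_and] <;> omega

theorem sum_countBelow (t m : ℕ) : ∑ i, countBelow σ i t m = min n t * min n m := by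
  have hday : ∀ s : Fin n, ∑ i, (if (σ s i : ℕ) < m then 1 else 0) = min n m := by
    intro s
    rw [Equiv.sum_comp (σ s) (fun v : Fin n => if (v : ℕ) < m then 1 else 0), sum_boole,
      Nat.cast_id, Fin.card_filter_val_lt]
  simp only [countBelow, card_filter, ite_and]
  rw [sum_comm]
  calc ∑ s : Fin n, ∑ i, (if (s : ℕ) < t then (if (σ s i : ℕ) < m then 1 else 0) else 0)
      = ∑ s : Fin n, if (s : ℕ) < t then min n m else 0 :=
        sum_congr rfl fun s _ => by split_ifs <;> simp only [hday, sum_const_zero]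
    _ = min n t * min n m := by
        rw [sum_ite, sum_const_zero, add_zero, sum_const, Fin.card_filter_val_lt, smul_eq_mul]

variable {σ} in
theorem BalancedSeq.le_countBelow (hB : BalancedSeq n σ) (i : Fin n) {t j m : ℕ} (ht : t ≤ n)
    (hj : 1 ≤ j) (hjt : j ≤ t) (hm : j * n ≤ t * m) : j ≤ countBelow σ i t m := by
  refine (hB i t (mem_Icc.2 ⟨hj.trans hjt, ht⟩) j (mem_Icc.2 ⟨hj, hjt⟩)).trans
    (card_le_card fun s => ?_)
  have hceil : ⌈((j * n : ℕ) : ℚ) / (t : ℚ)⌉ ≤ (m : ℤ) := by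
    rw [Int.ceil_le, div_le_iff₀ (Nat.cast_pos.2 (by omega))]
    exact_mod_cast (by linarith : j * n ≤ m * t)
  simp only [mem_filter, mem_univ, true_and]
  omega

end

theorem BalancedSeq.countBelow_add_three_le {k q : ℕ}
    {σ : Fin (6 * k) → Equiv.Perm (Fin (6 * k))} (hB : BalancedSeq (6 * k) σ) (hk : 1 ≤ k)
    (hq : 3 * k ≤ 2 * q) (hqk : q ≤ 2 * k)
    (i : Fin (6 * k)) :
    countBelow σ i 2 q + 3 ≤
      countBelow σ i 2 (2 * k) + countBelow σ i 3 q + countBelow σ i 4 (3 * k) := by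
  have h21 : 1 ≤ countBelow σ i 2 (3 * k) :=
    hB.le_countBelow i (by omega) le_rfl (by omega) (by omega)
  have h31 : 1 ≤ countBelow σ i 3 (2 * k) :=
    hB.le_countBelow i (by omega) le_rfl (by omega) (by omega)
  have h41 : 1 ≤ countBelow σ i 4 q :=
    hB.le_countBelow i (by omega) le_rfl (by omega) (by omega)
  have h42 : 2 ≤ countBelow σ i 4 (3 * k) :=
    hB.le_countBelow i (by omega) (by omega) (by omega) (by omega)
  have hq2 : countBelow σ i 2 q ≤ countBelow σ i 2 (2 * k) := countBelow_mono σ i le_rfl hqk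
  have hq3 : countBelow σ i 2 q ≤ countBelow σ i 3 q := countBelow_mono σ i (by omega) le_rfl
  have hday2 : countBelow σ i 3 (2 * k) + countBelow σ i 2 (3 * k) ≤
      countBelow σ i 3 (3 * k) + countBelow σ i 2 (2 * k) :=
    countBelow_add_countBelow_le σ i (by omega) (by omega)
  have hday3 : countBelow σ i 4 q + countBelow σ i 3 (3 * k) ≤
      countBelow σ i 4 (3 * k) + countBelow σ i 3 q :=
    countBelow_add_countBelow_le σ i (by omega) (by omega)
  -- If `i` gets none of the `2k` best items on days 0, 1 and none of the `q` best on day 2,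
  -- then `hday2` and `hday3` count days 2 and 3 among those with one of the `3k` best items,
  -- besides day 0 or day 1.
  omega

/-- For every integer `k ≥ 2`, there is no balanced permutation sequence of length
`n = 6k`. -/
theorem no_balanced_sequence_six_k (k : ℕ) (hk : 2 ≤ k)
    (σ : Fin (6 * k) → Equiv.Perm (Fin (6 * k))) :
    ¬ BalancedSeq (6 * k) σ := by
  intro hB
  have hsum := sum_le_sum fun i (_ : i ∈ univ) =>
    hB.countBelow_add_three_le (q := (3 * k + 1) / 2) (by omega) (by omega) (by omega) i
  simp (disch := omega) only [sum_add_distrib, sum_countBelow, min_eq_right, sum_const, card_univ,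
    Fintype.card_fin, smul_eq_mul] at hsum
  omega
end

section
/- For every integer k ≥ 3, there is no balanced permutation sequence of length n = 6k + 2. -/
open Finset Equiv

lemma Rat.ceil_natCast_div_natCast_eq_natCast_div (a b : ℕ) :
    ⌈(a / b : ℚ)⌉ = ((a + b - 1) / b : ℕ) := by
  rcases Nat.eq_zero_or_pos b with rfl | hb
  · simp
  have hlo : (a + b - 1) / b * b ≤ a + b - 1 := Nat.div_mul_le_self _ _
  have hhi : a + b - 1 < (a + b - 1) / b * b + b := Nat.lt_div_mul_add hb
  have hbQ : (0 : ℚ) < b := by exact_mod_cast hb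
  rw [Int.ceil_eq_iff, Int.cast_natCast, lt_div_iff₀ hbQ, div_le_iff₀ hbQ]
  constructor
  · rw [sub_mul, one_mul, sub_lt_iff_lt_add]
    exact_mod_cast (by omega : (a + b - 1) / b * b < a + b)
  · exact_mod_cast (by omega : a ≤ (a + b - 1) / b * b)

lemma Fin.card_filter_val_lt_and {n t : ℕ} (ht : t ≤ n) (P : ℕ → Prop) [DecidablePred P] :
    #{s : Fin n | (s : ℕ) < t ∧ P s} = #{s ∈ range t | P s} := by
  rw [← card_map Fin.valEmbedding]
  congr 1
  ext s
  simp only [mem_map, mem_filter, mem_univ, true_and, valEmbedding_apply, mem_range]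
  exact ⟨fun ⟨r, hr, hrs⟩ => hrs ▸ hr, fun hs => ⟨⟨s, by omega⟩, hs, rfl⟩⟩

lemma Equiv.Perm.card_filter_val_apply_lt {n m : ℕ} (hm : m ≤ n) (e : Perm (Fin n)) :
    #{i : Fin n | (e i : ℕ) < m} = m := by
  rw [card_equiv e (t := {r : Fin n | (r : ℕ) < m}) (by simp), Fin.card_filter_val_lt,
    min_eq_right hm]

lemma three_le_weight_of_tests {a b c x₀ x₁ x₂ x₃ : ℕ} (hab : a ≤ b) (hbc : b ≤ c)
    (h2 : 1 ≤ (if x₀ < c then 1 else 0) + (if x₁ < c then 1 else 0))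
    (h3 : 1 ≤ (if x₀ < b then 1 else 0) + (if x₁ < b then 1 else 0) + (if x₂ < b then 1 else 0))
    (h41 : 1 ≤ (if x₀ < a then 1 else 0) + (if x₁ < a then 1 else 0) +
      (if x₂ < a then 1 else 0) + (if x₃ < a then 1 else 0))
    (h42 : 2 ≤ (if x₀ < c then 1 else 0) + (if x₁ < c then 1 else 0) +
      (if x₂ < c then 1 else 0) + (if x₃ < c then 1 else 0)) :
    3 ≤ (if x₀ < c then 1 else 0) + (if x₁ < c then 1 else 0) +
      (if x₂ < c then 1 else 0) + (if x₃ < c then 1 else 0) +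
      (if x₀ < b then 1 else 0) + (if x₁ < b then 1 else 0) + (if x₂ < a then 1 else 0) := by
  by_cases hbonus : x₀ < b ∨ x₁ < b ∨ x₂ < a
  · rcases hbonus with h | h | h <;> rw [if_pos h] <;> omega
  -- Without a bonus, the tests force `x₂ < b` and `x₃ < a`: three of the four days are below `c`.
  simp only [not_or, not_lt] at hbonus
  obtain ⟨h₀, h₁, h₂⟩ := hbonus
  have hx₂ : x₂ < c := by
    by_contra h
    rw [if_neg (by omega : ¬x₀ < b), if_neg (by omega : ¬x₁ < b),
      if_neg (by omega : ¬x₂ < b)] at h3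
    omega
  have hx₃ : x₃ < c := by
    by_contra h
    rw [if_neg (by omega : ¬x₀ < a), if_neg (by omega : ¬x₁ < a), if_neg (by omega : ¬x₂ < a),
      if_neg (by omega : ¬x₃ < a)] at h41
    omega
  have hx₀₁ : x₀ < c ∨ x₁ < c := by
    by_contra h
    rw [not_or] at h
    rw [if_neg h.1, if_neg h.2] at h2
    omega
  rcases hx₀₁ with h | h <;> rw [if_pos h, if_pos hx₂, if_pos hx₃] <;> omega

section

/-- The rank, counted from `0`, of the item player `i` gets on day `s + 1`. Days are indexed by `ℕ`
so that the first few days are numerals; the junk rank `n` on days `s ≥ n` never matters. -/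
def itemRank {n : ℕ} (σ : Fin n → Perm (Fin n)) (i : Fin n) (s : ℕ) : ℕ :=
  if h : s < n then σ ⟨s, h⟩ i else n

variable {n : ℕ} {σ : Fin n → Perm (Fin n)}

lemma itemRank_val (i s : Fin n) : itemRank σ i s = σ s i := dif_pos s.isLt

lemma sum_ite_itemRank_lt {s m : ℕ} (hs : s < n) (hm : m ≤ n) :
    ∑ i, (if itemRank σ i s < m then 1 else 0) = m := by
  rw [← card_filter]
  simpa only [itemRank, dif_pos hs] using Perm.card_filter_val_apply_lt hm (σ ⟨s, hs⟩)

lemma BalancedSeq.le_sum_ite_itemRank_lt (hB : BalancedSeq n σ) (i : Fin n) {t j m : ℕ}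
    (ht : t ≤ n) (hj : 1 ≤ j) (hjt : j ≤ t) (hm : (j * n + t - 1) / t = m) :
    j ≤ ∑ s ∈ range t, if itemRank σ i s < m then 1 else 0 := by
  have h := hB i t (mem_Icc.2 ⟨by omega, ht⟩) j (mem_Icc.2 ⟨hj, hjt⟩)
  simp only [Rat.ceil_natCast_div_natCast_eq_natCast_div, hm, ← itemRank_val] at h
  rw [← card_filter, ← Fin.card_filter_val_lt_and ht]
  convert h using 4
  omega

theorem BalancedSeq.three_le_weight (hB : BalancedSeq n σ) (hn : 4 ≤ n) (i : Fin n) :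
    3 ≤ ∑ s ∈ range 4, (if itemRank σ i s < (n + 1) / 2 then 1 else 0) +
      (if itemRank σ i 0 < (n + 2) / 3 then 1 else 0) +
      (if itemRank σ i 1 < (n + 2) / 3 then 1 else 0) +
      (if itemRank σ i 2 < (n + 3) / 4 then 1 else 0) := by
  have h2 := hB.le_sum_ite_itemRank_lt i (t := 2) (j := 1) (m := (n + 1) / 2) (by omega) le_rfl
    (by omega) (by omega)
  have h3 := hB.le_sum_ite_itemRank_lt i (t := 3) (j := 1) (m := (n + 2) / 3) (by omega) le_rfl
    (by omega) (by omega)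
  have h41 := hB.le_sum_ite_itemRank_lt i (t := 4) (j := 1) (m := (n + 3) / 4) hn le_rfl
    (by omega) (by omega)
  have h42 := hB.le_sum_ite_itemRank_lt i (t := 4) (j := 2) (m := (n + 1) / 2) hn (by omega)
    (by omega) (by omega)
  simp only [sum_range_succ, sum_range_zero, zero_add] at h2 h3 h41 h42 ⊢
  exact three_le_weight_of_tests (by omega) (by omega) h2 h3 h41 h42

theorem BalancedSeq.three_mul_le (hB : BalancedSeq n σ) (hn : 4 ≤ n) :
    3 * n ≤ 4 * ((n + 1) / 2) + 2 * ((n + 2) / 3) + (n + 3) / 4 :=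
  calc 3 * n = ∑ _i : Fin n, 3 := by simp [mul_comm]
    _ ≤ _ := sum_le_sum fun i _ => hB.three_le_weight hn i
    _ = _ := by
      rw [sum_add_distrib, sum_add_distrib, sum_add_distrib, sum_comm]
      simp (disch := omega) only [sum_range_succ, sum_range_zero, zero_add, sum_ite_itemRank_lt]
      ring

end

/-- For every integer `k ≥ 3`, there is no balanced permutation sequence of length
`n = 6k + 2`. -/
theorem no_balanced_sequence_six_k_add_two (k : ℕ) (hk : 3 ≤ k)
    (σ : Fin (6 * k + 2) → Equiv.Perm (Fin (6 * k + 2))) :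
    ¬ BalancedSeq (6 * k + 2) σ := fun hB => by
  have := hB.three_mul_le (by omega)
  omega
end

section
/- For every integer k ≥ 19, there is no weakly-balanced permutation sequence of length n = 6k. -/
/-- `WeaklyBalanced n σ` : for every player `i`, every day `t ∈ {1,…,n}` and every
`j ∈ {1,…,t}`, the `j`-th smallest of the items received in the first `t` days is at most
`⌊j·n/t⌋ + 1`; equivalently, in the first `t` days player `i` receives at least `j` items
from among items `1, …, ⌊j·n/t⌋ + 1`. -/
def WeaklyBalanced (n : ℕ) (σ : Fin n → Equiv.Perm (Fin n)) : Prop :=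
  ∀ i : Fin n, ∀ t ∈ Finset.Icc 1 n, ∀ j ∈ Finset.Icc 1 t,
    j ≤ (Finset.univ.filter (fun s : Fin n => (s : ℕ) < t ∧
        (((σ s i : ℕ) + 1 : ℤ) ≤ ⌊((j * n : ℕ) : ℚ) / (t : ℚ)⌋ + 1))).card

open Finset

/-! Double counting. Index days and items from `0` and put `h = ⌊3k/2⌋`. A player scores one
point for each day `≤ 3k` bringing an item `≤ 3`, each day `≤ 2k` bringing an item `≤ 1`, and
each day `≤ h` bringing item `2`. Weak balance on days `h + 1`, `2k + 1` and `3k + 1` forces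
every player to score at least `3`, so at least `18k` in total. But each day hands out every
item exactly once, so the total score is `4(3k + 1) + 2(2k + 1) + (h + 1) ≤ 17.5k + 7 < 18k`. -/

theorem WeaklyBalanced.le_card_filter {n : ℕ} {σ : Fin n → Equiv.Perm (Fin n)}
    (hσ : WeaklyBalanced n σ) (i : Fin n) {d c : Fin n} {j : ℕ} (hjd : j ≤ d + 1)
    (hjn : j * n < (c + 1) * (d + 1)) :
    j ≤ #{s ∈ Iic d | σ s i ∈ Iic c} := by
  rcases Nat.eq_zero_or_pos j with rfl | hj
  · exact Nat.zero_le _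
  refine (hσ i (d + 1) (mem_Icc.2 ⟨by omega, d.isLt⟩) j (mem_Icc.2 ⟨hj, hjd⟩)).trans
    (card_le_card fun s hs => ?_)
  simp only [mem_filter, mem_univ, true_and, mem_Iic, Fin.le_def] at hs ⊢
  have hfloor : ⌊((j * n : ℕ) : ℚ) / ((d + 1 : ℕ) : ℚ)⌋ < (c : ℤ) + 1 := by
    rw [Int.floor_lt, div_lt_iff₀ (by positivity)]
    exact_mod_cast hjn
  omega

theorem sum_card_filter_perm_apply_mem {ι α : Type*} [Fintype ι] [Fintype α] [DecidableEq α]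
    (σ : ι → Equiv.Perm α) (D : Finset ι) (X : Finset α) :
    ∑ i, #{s ∈ D | σ s i ∈ X} = #D * #X := by
  simp_rw [card_filter]
  rw [sum_comm]
  have hrow : ∀ s, ∑ i, (if σ s i ∈ X then 1 else 0) = #X := fun s => by
    rw [Equiv.sum_comp (σ s) (fun x => if x ∈ X then 1 else 0), sum_boole]
    simp
  simp [hrow]

theorem three_le_card_add_card_add_card {ι α : Type*} [LinearOrder ι] [LocallyFiniteOrderBot ι]
    [LinearOrder α] [LocallyFiniteOrder α] [LocallyFiniteOrderBot α]
    (f : ι → α) {p q r : ι} {a b c : α} (hpq : p ≤ q) (hqr : q ≤ r) (hbc : b ≤ c)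
    (hp : 1 ≤ #{s ∈ Iic p | f s ∈ Iic c}) (hq : 1 ≤ #{s ∈ Iic q | f s ∈ Iic b})
    (hr : 1 ≤ #{s ∈ Iic r | f s ∈ Iic a}) (hr₂ : 2 ≤ #{s ∈ Iic r | f s ∈ Iic c}) :
    3 ≤ #{s ∈ Iic r | f s ∈ Iic c} + #{s ∈ Iic q | f s ∈ Iic a} +
      #{s ∈ Iic p | f s ∈ Ioc a b} := by
  by_cases hBC : 1 ≤ #{s ∈ Iic q | f s ∈ Iic a} + #{s ∈ Iic p | f s ∈ Ioc a b}
  · omega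
  have hB : ∀ s ≤ q, a < f s := by
    simpa [filter_eq_empty_iff] using (show #{s ∈ Iic q | f s ∈ Iic a} = 0 by omega)
  have hC : ∀ s ≤ p, a < f s → b < f s := by
    simpa [filter_eq_empty_iff] using (show #{s ∈ Iic p | f s ∈ Ioc a b} = 0 by omega)
  obtain ⟨sp, hsp, hfp⟩ : ∃ s ≤ p, f s ≤ c := by simpa [Finset.Nonempty] using card_pos.1 hp
  obtain ⟨sq, hsq, hfq⟩ : ∃ s ≤ q, f s ≤ b := by simpa [Finset.Nonempty] using card_pos.1 hq
  obtain ⟨sr, hsr, hfr⟩ : ∃ s ≤ r, f s ≤ a := by simpa [Finset.Nonempty] using card_pos.1 hr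
  -- `sr`, `sq`, `sp` receive items in the three disjoint ranges `≤ a`, `(a, b]`, `(b, c]`.
  have haq : a < f sq := hB sq hsq
  have hbp : b < f sp := hC sp hsp (hB sp (hsp.trans hpq))
  have hA : 2 < #{s ∈ Iic r | f s ∈ Iic c} := by
    refine two_lt_card.2 ⟨sr, ?_, sq, ?_, sp, ?_, ?_, ?_, ?_⟩
    · simp only [mem_filter, mem_Iic]; exact ⟨hsr, by order⟩
    · simp only [mem_filter, mem_Iic]; exact ⟨by order, by order⟩
    · simp only [mem_filter, mem_Iic]; exact ⟨by order, hfp⟩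
    all_goals rintro rfl; order
  omega

/-- For every integer `k ≥ 19`, there is no weakly-balanced permutation sequence of length
`n = 6k`. -/
theorem no_weakly_balanced_sequence_six_k (k : ℕ) (hk : 19 ≤ k)
    (σ : Fin (6 * k) → Equiv.Perm (Fin (6 * k))) :
    ¬ WeaklyBalanced (6 * k) σ := by
  intro hσ
  let p : Fin (6 * k) := ⟨3 * k / 2, by omega⟩
  let q : Fin (6 * k) := ⟨2 * k, by omega⟩
  let r : Fin (6 * k) := ⟨3 * k, by omega⟩
  let a : Fin (6 * k) := ⟨1, by omega⟩
  let b : Fin (6 * k) := ⟨2, by omega⟩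
  let c : Fin (6 * k) := ⟨3, by omega⟩
  have hplayer : ∀ i, 3 ≤ #{s ∈ Iic r | σ s i ∈ Iic c} + #{s ∈ Iic q | σ s i ∈ Iic a} +
      #{s ∈ Iic p | σ s i ∈ Ioc a b} := fun i => by
    refine three_le_card_add_card_add_card (fun s => σ s i) ?_ ?_ ?_
      (hσ.le_card_filter i ?_ ?_) (hσ.le_card_filter i ?_ ?_)
      (hσ.le_card_filter i ?_ ?_) (hσ.le_card_filter i ?_ ?_)
    all_goals simp only [p, q, r, a, b, c, Fin.mk_le_mk]; omega
  have htotal := sum_le_sum fun i (_ : i ∈ univ) => hplayer i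
  simp only [sum_add_distrib, sum_card_filter_perm_apply_mem, Fin.card_Iic, Fin.card_Ioc,
    sum_const, card_univ, Fintype.card_fin, smul_eq_mul, p, q, r, a, b, c] at htotal
  omega
end

section
/- There exists a weakly-balanced permutation sequence of length n = 12. -/
open Finset in
theorem weaklyBalanced_iff {n : ℕ} (σ : Fin n → Equiv.Perm (Fin n)) :
    WeaklyBalanced n σ ↔ ∀ i : Fin n, ∀ t ∈ Icc 1 n, ∀ j ∈ Icc 1 t,
      j ≤ #{s : Fin n | (s : ℕ) < t ∧ (σ s i : ℕ) ≤ j * n / t} := by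
  simp only [WeaklyBalanced, Rat.floor_natCast_div_natCast, add_le_add_iff_right,
    ← Int.natCast_div, Nat.cast_le]

def Equiv.Perm.shiftSequence {n : ℕ} [NeZero n] (π : Equiv.Perm (Fin n)) :
    Fin n → Equiv.Perm (Fin n) :=
  fun s => (Equiv.addLeft s).trans π

def weaklyBalancedSeed : Equiv.Perm (Fin 12) :=
  Function.Involutive.toPerm ![0, 5, 8, 3, 10, 1, 6, 9, 2, 7, 4, 11]
    (by intro x; revert x; decide)

/-- There exists a weakly-balanced permutation sequence of length `n = 12`. -/
theorem exists_weakly_balanced_sequence_twelve :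
    ∃ σ : Fin 12 → Equiv.Perm (Fin 12), WeaklyBalanced 12 σ :=
  ⟨weaklyBalancedSeed.shiftSequence, (weaklyBalanced_iff _).2 (by decide)⟩
end

section
/- There is no balanced permutation sequence of length n = 12; together with the existence of balanced sequences for all n ≤ 11, twelve is the smallest positive integer that does not admit a balanced permutation sequence. -/
open Finset

variable {n m : ℕ}

theorem balancedSeq_iff_nat {σ : Fin n → Equiv.Perm (Fin n)} :
    BalancedSeq n σ ↔ ∀ i : Fin n, ∀ t ∈ Icc 1 n, ∀ j ∈ Icc 1 t,
      j ≤ #{s : Fin n | (s : ℕ) < t ∧ (σ s i : ℕ) * t < j * n} := by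
  refine forall_congr' fun i => forall₂_congr fun t ht => forall₂_congr fun j _ => ?_
  have ht : (0 : ℚ) < t := by exact_mod_cast (mem_Icc.1 ht).1
  have hitem (s : Fin n) :
      ((σ s i : ℕ) + 1 : ℤ) ≤ ⌈((j * n : ℕ) : ℚ) / t⌉ ↔ (σ s i : ℕ) * t < j * n := by
    rw [Int.add_one_le_iff, Int.lt_ceil, lt_div_iff₀ ht]
    norm_cast
  simp only [hitem]

instance : DecidablePred (BalancedSeq n) := fun _ => decidable_of_iff _ balancedSeq_iff_nat.symm

def prefixCount (x : Fin m → Fin n) (t c : ℕ) : ℕ :=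
  #{s : Fin m | (s : ℕ) < t ∧ (x s : ℕ) < c}

theorem prefixCount_comp_castLE {k : ℕ} (x : Fin m → Fin n) (hkm : k ≤ m) {t : ℕ} (htk : t ≤ k)
    (c : ℕ) : prefixCount (x ∘ Fin.castLE hkm) t c = prefixCount x t c := by
  rw [prefixCount, ← card_map (Fin.castLEEmb hkm)]
  congr 1
  ext s
  simp only [mem_map, mem_filter_univ, Fin.castLEEmb_apply, Function.comp_apply]
  constructor
  · rintro ⟨a, ha, rfl⟩
    exact ha
  · rintro ⟨hs, hxs⟩
    exact ⟨⟨s, by omega⟩, ⟨hs, hxs⟩, rfl⟩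

theorem sum_prefixCount (σ : Fin n → Equiv.Perm (Fin n)) {t c : ℕ} (ht : t ≤ n) (hc : c ≤ n) :
    ∑ i, prefixCount (σ · i) t c = t * c := by
  calc ∑ i, prefixCount (σ · i) t c
      = ∑ s : Fin n, ∑ i, if (s : ℕ) < t ∧ (σ s i : ℕ) < c then 1 else 0 := by
        simp only [prefixCount, card_filter]
        exact sum_comm
    _ = ∑ s : Fin n, if (s : ℕ) < t then c else 0 := by
        refine sum_congr rfl fun s _ => ?_
        split_ifs with hs
        · simp only [hs, true_and]
          rw [Equiv.sum_comp (σ s) (fun v : Fin n => if (v : ℕ) < c then 1 else 0), ← card_filter,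
            Fin.card_filter_val_lt, min_eq_right hc]
        · simp [hs]
    _ = t * c := by
        rw [← sum_filter, sum_const, Fin.card_filter_val_lt, min_eq_right ht, smul_eq_mul]

namespace BalancedSeq

variable {σ : Fin n → Equiv.Perm (Fin n)} {t j c : ℕ}

theorem le_prefixCount (h : BalancedSeq n σ) (ht : t ∈ Icc 1 n) (hj : j ∈ Icc 1 t)
    (hc : t * c = j * n) (i : Fin n) : j ≤ prefixCount (σ · i) t c := by
  have ht0 : 0 < t := (mem_Icc.1 ht).1
  have hitem (s : Fin n) : (σ s i : ℕ) * t < j * n ↔ (σ s i : ℕ) < c := by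
    rw [← hc, mul_comm t c]
    exact Nat.mul_lt_mul_right ht0
  simpa only [prefixCount, hitem] using balancedSeq_iff_nat.1 h i t ht j hj

theorem prefixCount_eq (h : BalancedSeq n σ) (ht : t ∈ Icc 1 n) (hj : j ∈ Icc 1 t)
    (hc : t * c = j * n) (i : Fin n) : prefixCount (σ · i) t c = j := by
  obtain ⟨ht0, htn⟩ := mem_Icc.1 ht
  have hcn : c ≤ n := Nat.le_of_mul_le_mul_left
    (hc.trans_le (Nat.mul_le_mul_right n (mem_Icc.1 hj).2)) ht0
  have hsum : ∑ _i : Fin n, j = ∑ i, prefixCount (σ · i) t c := by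
    rw [sum_prefixCount σ htn hcn, sum_const, card_univ, Fintype.card_fin, smul_eq_mul, hc,
      mul_comm]
  exact ((sum_eq_sum_iff_of_le fun i _ => h.le_prefixCount ht hj hc i).1 hsum i (mem_univ i)).symm

end BalancedSeq

def coverItems : Fin 4 → Finset (Fin 12) := ![{3}, {3}, {0, 1, 2, 4, 5}, {3, 4, 5}]

/- Suppose `y 0, y 1 ≠ 3`, `y 2 ∈ {3} ∪ [6, 12)` and `y 3 ∉ [3, 6)`. The hypotheses say that exactly
one of `y 0, y 1` is `< 6`, exactly one of `y 0, y 1, y 2` is `< 4`, and exactly one of the four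
values lies in `[3, 6)`. If `y 2 = 3`, then `y 0, y 1 ≥ 4` and one of them lies in `{4, 5}`, a second
value in `[3, 6)`. Otherwise the value in `[3, 6)` is `y 0` or `y 1`, lies in `{4, 5}`, and the other
one is `≥ 6`, so none of `y 0, y 1, y 2` is `< 4`. -/
theorem exists_mem_coverItems (y : Fin 4 → Fin 12) (h₁ : prefixCount y 2 6 = 1)
    (h₂ : prefixCount y 3 4 = 1) (h₃ : prefixCount y 4 3 = 1) (h₄ : prefixCount y 4 6 = 2) :
    ∃ s, y s ∈ coverItems s := by
  suffices y 0 ∈ coverItems 0 ∨ y 1 ∈ coverItems 1 ∨ y 2 ∈ coverItems 2 ∨ y 3 ∈ coverItems 3 by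
    obtain h | h | h | h := this <;> exact ⟨_, h⟩
  simp only [prefixCount, card_filter, Fin.sum_univ_four] at h₁ h₂ h₃ h₄
  revert h₁ h₂ h₃ h₄
  generalize y 0 = a, y 1 = b, y 2 = c, y 3 = d
  revert a b c d
  decide +kernel

theorem card_filter_perm_apply_mem {α : Type*} [Fintype α] [DecidableEq α] (e : Equiv.Perm α)
    (S : Finset α) : #{a | e a ∈ S} = #S := by
  rw [← card_map e.toEmbedding]
  congr 1
  ext
  simp

theorem not_balancedSeq_twelve (σ : Fin 12 → Equiv.Perm (Fin 12)) : ¬ BalancedSeq 12 σ := by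
  intro h
  have h4 : 4 ≤ 12 := by norm_num
  have hcount (i : Fin 12) {t j c : ℕ} (ht : t ∈ Icc 1 4) (hj : j ∈ Icc 1 t)
      (hc : t * c = j * 12) : prefixCount ((σ · i) ∘ Fin.castLE h4) t c = j := by
    rw [prefixCount_comp_castLE _ _ (mem_Icc.1 ht).2]
    exact h.prefixCount_eq (Icc_subset_Icc_right h4 ht) hj hc i
  have hcover (i : Fin 12) : ∃ s : Fin 4, σ (Fin.castLE h4 s) i ∈ coverItems s :=
    exists_mem_coverItems _ (hcount i (by decide) (by decide) rfl)
      (hcount i (by decide) (by decide) rfl) (hcount i (by decide) (by decide) rfl)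
      (hcount i (by decide) (by decide) rfl)
  have : 12 ≤ 10 := calc
    12 = #(univ : Finset (Fin 12)) := rfl
    _ ≤ #(univ.biUnion fun s : Fin 4 => {i | σ (Fin.castLE h4 s) i ∈ coverItems s}) :=
        card_le_card fun i _ => by simpa using hcover i
    _ ≤ ∑ s : Fin 4, #{i | σ (Fin.castLE h4 s) i ∈ coverItems s} := card_biUnion_le
    _ = 10 := by simp only [card_filter_perm_apply_mem]; rfl
  omega

noncomputable def ofRows (M : Fin n → Fin n → Fin n) (hM : ∀ s, Function.Bijective (M s)) :
    Fin n → Equiv.Perm (Fin n) :=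
  fun s => Equiv.ofBijective (M s) (hM s)

noncomputable def smallBalancedSeq : (n : ℕ) → Fin n → Equiv.Perm (Fin n)
  | 1 => ofRows
      ![![0]] (by decide)
  | 2 => ofRows
      ![![0, 1],
        ![1, 0]] (by decide)
  | 3 => ofRows
      ![![0, 1, 2],
        ![1, 2, 0],
        ![2, 0, 1]] (by decide)
  | 4 => ofRows
      ![![0, 1, 2, 3],
        ![2, 3, 0, 1],
        ![1, 0, 3, 2],
        ![3, 2, 1, 0]] (by decide)
  | 5 => ofRows
      ![![0, 1, 2, 3, 4],
        ![1, 3, 4, 0, 2],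
        ![3, 2, 0, 4, 1],
        ![2, 4, 3, 1, 0],
        ![4, 0, 1, 2, 3]] (by decide)
  | 6 => ofRows
      ![![0, 1, 2, 3, 4, 5],
        ![3, 4, 5, 0, 1, 2],
        ![4, 2, 0, 5, 3, 1],
        ![1, 5, 3, 2, 0, 4],
        ![2, 0, 1, 4, 5, 3],
        ![5, 3, 4, 1, 2, 0]] (by decide)
  | 7 => ofRows
      ![![0, 1, 2, 3, 4, 5, 6],
        ![1, 4, 5, 6, 0, 2, 3],
        ![2, 5, 3, 0, 6, 4, 1],
        ![6, 2, 0, 4, 3, 1, 5],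
        ![5, 3, 4, 1, 2, 6, 0],
        ![3, 6, 1, 2, 5, 0, 4],
        ![4, 0, 6, 5, 1, 3, 2]] (by decide)
  | 8 => ofRows
      ![![0, 1, 2, 3, 4, 5, 6, 7],
        ![4, 5, 6, 7, 0, 1, 2, 3],
        ![2, 3, 4, 0, 6, 7, 5, 1],
        ![6, 7, 0, 4, 2, 3, 1, 5],
        ![1, 0, 5, 6, 7, 2, 3, 4],
        ![5, 4, 1, 2, 3, 6, 7, 0],
        ![3, 2, 7, 1, 5, 0, 4, 6],
        ![7, 6, 3, 5, 1, 4, 0, 2]] (by decide)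
  | 9 => ofRows
      ![![0, 1, 2, 3, 4, 5, 6, 7, 8],
        ![3, 5, 6, 7, 8, 0, 1, 2, 4],
        ![6, 7, 3, 0, 1, 8, 4, 5, 2],
        ![1, 2, 7, 4, 5, 3, 8, 0, 6],
        ![5, 4, 0, 6, 2, 7, 3, 8, 1],
        ![7, 8, 5, 1, 6, 2, 0, 4, 3],
        ![2, 0, 4, 8, 3, 6, 5, 1, 7],
        ![4, 3, 8, 2, 0, 1, 7, 6, 5],
        ![8, 6, 1, 5, 7, 4, 2, 3, 0]] (by decide)
  | 10 => ofRows
      ![![0, 1, 2, 3, 4, 5, 6, 7, 8, 9],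
        ![5, 6, 7, 8, 9, 0, 1, 2, 3, 4],
        ![3, 8, 0, 5, 1, 7, 9, 4, 6, 2],
        ![8, 2, 5, 0, 6, 3, 4, 9, 1, 7],
        ![6, 4, 8, 7, 2, 9, 3, 0, 5, 1],
        ![1, 9, 3, 2, 7, 4, 8, 5, 0, 6],
        ![4, 0, 6, 9, 3, 1, 2, 8, 7, 5],
        ![9, 5, 1, 4, 8, 6, 7, 3, 2, 0],
        ![2, 7, 4, 1, 0, 8, 5, 6, 9, 3],
        ![7, 3, 9, 6, 5, 2, 0, 1, 4, 8]] (by decide)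
  | 11 => ofRows
      ![![4, 2, 0, 5, 7, 8, 9, 1, 6, 3, 10],
        ![7, 9, 10, 6, 3, 4, 0, 8, 2, 5, 1],
        ![3, 5, 7, 2, 9, 0, 1, 4, 8, 10, 6],
        ![1, 7, 3, 8, 2, 10, 6, 9, 4, 0, 5],
        ![9, 1, 4, 0, 6, 2, 8, 5, 10, 7, 3],
        ![10, 6, 2, 4, 1, 7, 5, 3, 0, 8, 9],
        ![6, 4, 8, 9, 10, 5, 3, 7, 1, 2, 0],
        ![0, 10, 5, 1, 4, 3, 7, 2, 9, 6, 8],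
        ![8, 3, 6, 10, 5, 9, 2, 0, 7, 1, 4],
        ![2, 8, 1, 3, 0, 6, 4, 10, 5, 9, 7],
        ![5, 0, 9, 7, 8, 1, 10, 6, 3, 4, 2]] (by decide)
  | _ => fun _ => 1

theorem balancedSeq_smallBalancedSeq (hn : n ≤ 11) : BalancedSeq n (smallBalancedSeq n) := by
  interval_cases n <;> decide +kernel

/-- There is no balanced permutation sequence of length `12`; moreover, `12` is the
smallest positive integer that does not admit a balanced permutation sequence. -/
theorem twelve_least_without_balanced_sequence :
    (∀ σ : Fin 12 → Equiv.Perm (Fin 12), ¬ BalancedSeq 12 σ) ∧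
    IsLeast {n : ℕ | 0 < n ∧ ∀ σ : Fin n → Equiv.Perm (Fin n), ¬ BalancedSeq n σ} 12 := by
  refine ⟨not_balancedSeq_twelve, ⟨by norm_num, not_balancedSeq_twelve⟩, fun n ⟨_, hnone⟩ => ?_⟩
  by_contra! hn
  exact hnone _ (balancedSeq_smallBalancedSeq (by omega))
end

section
/- For n = 12, there is no permutation sequence σ_1, …, σ_12 of {1, …, 12} satisfying the sliding-window top-balance condition: there do not exist permutations σ_1, …, σ_12 such that for every window length t ∈ {1, …, 12}, every set of t consecutive days s+1, …, s+t (with 0 ≤ s and s+t ≤ 12), and every player i, at least one of the items σ_{s+1}(i), …, σ_{s+t}(i) is at most ⌈12/t⌉. -/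
/-!
If `t * k = n`, then during any `t` consecutive days the `n` players together receive exactly
`t * k = n` of the top `k` items; as each player receives at least one, each receives exactly one.
Write `n = 6m` and let player `i` receive the best item on day `1`. Among days `1, …, 3m` player `i`
gets a top-2 item only on day `1`, so the window `2, …, 3m+1` forces one on day `3m+1`. Among days
`1, …, 2m` it gets a top-3 item only on day `1`, so the window `m+1, …, 3m` forces one on some day
in `2m+1, …, 3m`. The window `2m+1, …, 4m` then gives player `i` two top-3 items.
-/

open Finset

theorem card_filter_apply_mem_eq_one {ι α : Type*} [Fintype α] [DecidableEq α]
    (σ : ι → Equiv.Perm α) {W : Finset ι} {T : Finset α}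
    (hcard : #W * #T = Fintype.card α) (hcover : ∀ i, ∃ d ∈ W, σ d i ∈ T) (i : α) :
    #{d ∈ W | σ d i ∈ T} = 1 := by
  -- the counts are at least `1` and sum to `#W * #T = card α`
  have hpos : ∀ j ∈ (univ : Finset α), 1 ≤ #{d ∈ W | σ d j ∈ T} := fun j _ ↦
    let ⟨d, hdW, hdT⟩ := hcover j
    card_pos.mpr ⟨d, mem_filter.mpr ⟨hdW, hdT⟩⟩
  have hsum : ∑ j, #{d ∈ W | σ d j ∈ T} = ∑ _j : α, 1 := by
    calc ∑ j, #{d ∈ W | σ d j ∈ T}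
        = ∑ d ∈ W, #{j | σ d j ∈ T} := by
          simp only [card_filter]; exact sum_comm
      _ = ∑ _d ∈ W, #T := by
          refine sum_congr rfl fun d _ ↦ ?_
          simp only [card_filter]
          exact (Equiv.sum_comp (σ d) fun j ↦ if j ∈ T then 1 else 0).trans (by simp)
      _ = ∑ _j : α, 1 := by simp [hcard]
  exact ((sum_eq_sum_iff_of_le hpos).mp hsum.symm i (mem_univ i)).symm

def window (n s t : ℕ) : Finset (Fin n) := {d | s ≤ (d : ℕ) ∧ (d : ℕ) < s + t}

theorem card_window {n s t : ℕ} (h : s + t ≤ n) : #(window n s t) = t := by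
  have hsdiff : window n s t =
      univ.filter (fun d : Fin n ↦ (d : ℕ) < s + t) \ univ.filter (fun d ↦ (d : ℕ) < s) := by
    ext d; simp only [window, mem_sdiff, mem_filter, mem_univ, true_and]; omega
  rw [hsdiff, card_sdiff_of_subset, Fin.card_filter_val_lt, Fin.card_filter_val_lt]
  · omega
  · intro d; simp only [mem_filter, mem_univ, true_and]; omega

@[simp]
theorem mem_window {n s t : ℕ} {d : Fin n} :
    d ∈ window n s t ↔ s ≤ (d : ℕ) ∧ (d : ℕ) < s + t := by
  simp [window]

-- Day `d` is `Fin n`-indexed from `0`, and `σ d i` has rank `σ d i + 1`, so the top `k` items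
-- are those with `σ d i < k`.
def WindowCovered {n : ℕ} (σ : Fin n → Equiv.Perm (Fin n)) (t k : ℕ) : Prop :=
  ∀ s, s + t ≤ n → ∀ i, ∃ d ∈ window n s t, (σ d i : ℕ) < k

theorem WindowCovered.eq_of_lt {n t k : ℕ} {σ : Fin n → Equiv.Perm (Fin n)}
    (hcov : WindowCovered σ t k) (htk : t * k = n) {s : ℕ} (hs : s + t ≤ n) {i d d' : Fin n}
    (hd : d ∈ window n s t) (hd' : d' ∈ window n s t) (hk : (σ d i : ℕ) < k)
    (hk' : (σ d' i : ℕ) < k) : d = d' := by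
  have hcard : #(window n s t) * #{j : Fin n | (j : ℕ) < k} = Fintype.card (Fin n) := by
    rw [card_window hs, Fin.card_filter_val_lt, Fintype.card_fin]
    rcases Nat.eq_zero_or_pos t with rfl | ht
    · simp [← htk]
    · rw [min_eq_right (htk ▸ Nat.le_mul_of_pos_left k ht), htk]
  have hone := card_filter_apply_mem_eq_one σ hcard (by simpa using hcov s hs) i
  exact card_le_one.mp hone.le d (by simpa [hd] using hk) d' (by simpa [hd'] using hk')

def SlidingWindowTopBalanced {n : ℕ} (σ : Fin n → Equiv.Perm (Fin n)) : Prop :=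
  ∀ t ∈ Icc 1 n, ∀ s : ℕ, s + t ≤ n → ∀ i : Fin n,
    ∃ d : Fin n, s ≤ (d : ℕ) ∧ (d : ℕ) < s + t ∧ (((σ d i : ℕ) + 1 : ℤ) ≤ ⌈(n : ℚ) / (t : ℚ)⌉)

theorem SlidingWindowTopBalanced.windowCovered {n t k : ℕ} {σ : Fin n → Equiv.Perm (Fin n)}
    (h : SlidingWindowTopBalanced σ) (ht : 0 < t) (htk : t * k = n) : WindowCovered σ t k := by
  intro s hs i
  have hceil : ⌈(n : ℚ) / (t : ℚ)⌉ = k := by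
    rw [← htk, Nat.cast_mul, mul_div_cancel_left₀ _ (by positivity), Int.ceil_natCast]
  obtain ⟨d, hsd, hdt, hdk⟩ := h t (mem_Icc.mpr ⟨ht, by omega⟩) s hs i
  rw [hceil] at hdk
  exact ⟨d, mem_window.mpr ⟨hsd, hdt⟩, by omega⟩

theorem not_windowCovered_half_and_third {n : ℕ} (hn : 0 < n) (h6 : 6 ∣ n)
    {σ : Fin n → Equiv.Perm (Fin n)} (h2 : WindowCovered σ (n / 2) 2)
    (h3 : WindowCovered σ (n / 3) 3) : False := by
  let d₀ : Fin n := ⟨0, hn⟩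
  have hd₀ : (d₀ : ℕ) = 0 := rfl
  let i := (σ d₀).symm d₀
  have hi : (σ d₀ i : ℕ) = 0 := by simp [i, hd₀]
  obtain ⟨a, ha, ha2⟩ := h2 1 (by omega) i
  obtain ⟨b, hb, hb3⟩ := h3 (n / 2 - n / 3) (by omega) i
  rw [mem_window] at ha hb
  have ha_eq : (a : ℕ) = n / 2 := by
    by_contra hne
    have := congrArg Fin.val <| h2.eq_of_lt (by omega) (s := 0) (by omega)
      (mem_window.mpr (by omega)) (mem_window.mpr (by omega)) ha2 (by omega : (σ d₀ i : ℕ) < 2)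
    omega
  have hb_ge : n / 3 ≤ (b : ℕ) := by
    by_contra hlt
    have := congrArg Fin.val <| h3.eq_of_lt (by omega) (s := 0) (by omega)
      (mem_window.mpr (by omega)) (mem_window.mpr (by omega)) hb3 (by omega : (σ d₀ i : ℕ) < 3)
    omega
  have := congrArg Fin.val <| h3.eq_of_lt (by omega) (s := n / 3) (by omega)
    (mem_window.mpr (by omega)) (mem_window.mpr (by omega)) hb3 (by omega : (σ a i : ℕ) < 3)
  omega

theorem not_slidingWindowTopBalanced {n : ℕ} (hn : 0 < n) (h6 : 6 ∣ n)
    (σ : Fin n → Equiv.Perm (Fin n)) : ¬ SlidingWindowTopBalanced σ := fun h ↦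
  not_windowCovered_half_and_third hn h6 (h.windowCovered (by omega) (by omega))
    (h.windowCovered (by omega) (by omega))

/-- For `n = 12`, no permutation sequence satisfies the sliding-window top-balance
condition: there are no permutations `σ_1, …, σ_12` of `{1,…,12}` such that for every
window length `t ∈ {1,…,12}` and every window of `t` consecutive days `s+1, …, s+t`
(with `s + t ≤ 12`), every player receives, during that window, at least one item of rank
at most `⌈12/t⌉` (item assigned on day `d` has rank `(σ d i : ℕ) + 1`). -/
theorem no_sliding_window_top_balanced_twelve :
    ¬ ∃ σ : Fin 12 → Equiv.Perm (Fin 12),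
        ∀ t ∈ Finset.Icc 1 12, ∀ s : ℕ, s + t ≤ 12 → ∀ i : Fin 12,
          ∃ d : Fin 12, s ≤ (d : ℕ) ∧ (d : ℕ) < s + t ∧
            (((σ d i : ℕ) + 1 : ℤ) ≤ ⌈(12 : ℚ) / (t : ℚ)⌉) := by
  rintro ⟨σ, h⟩
  exact not_slidingWindowTopBalanced (by norm_num) (by norm_num) σ h
end

section
/- For every integer n ≥ 2 and every day t with 1 ≤ t < n, no permutation sequence of length n is ordinally proportional after day t: for every list of permutations σ_1, …, σ_n of {1, …, n} there exist a valuation v : {1, …, n} → ℝ with v(1) > v(2) > … > v(n) and a player i such that Σ_{s=1}^{t} v(σ_s(i)) < (t/n) · Σ_{j=1}^{n} v(j). -/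
/-!
On each of the first `t < n` days the best item goes to a single player, so some player never
receives it. Under the geometric valuation `v j = q ^ j` with `q = 1 / (n + 1)` the best item
alone outweighs `n` copies of the second best, so that player falls short of the proportional
share.
-/

open Finset

theorem Equiv.Perm.exists_forall_apply_ne_of_card_lt {ι D : Type*} [Fintype ι] [DecidableEq ι]
    (σ : D → Equiv.Perm ι) (S : Finset D) (hS : #S < Fintype.card ι) (a : ι) :
    ∃ i, ∀ s ∈ S, σ s i ≠ a := by
  have hlt : #(S.image fun s => (σ s).symm a) < #(univ : Finset ι) :=
    card_image_le.trans_lt (by rwa [card_univ])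
  obtain ⟨i, -, hi⟩ := exists_mem_notMem_of_card_lt_card hlt
  refine ⟨i, fun s hs hsi => hi (mem_image.mpr ⟨s, hs, ?_⟩)⟩
  rw [← hsi, Equiv.symm_apply_apply]

theorem sum_pow_succ_le_card_mul_sq {D : Type*} {q : ℝ} (hq0 : 0 ≤ q) (hq1 : q ≤ 1)
    (S : Finset D) (k : D → ℕ) (hk : ∀ s ∈ S, 1 ≤ k s) :
    ∑ s ∈ S, q ^ (k s + 1) ≤ #S * q ^ 2 := by
  rw [← nsmul_eq_mul]
  exact sum_le_card_nsmul _ _ _ fun s hs => pow_le_pow_of_le_one hq0 hq1 (Nat.succ_le_succ (hk s hs))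

theorem not_ordinally_proportional_before_day_n_general (n : ℕ)
    (t : ℕ) (ht : 1 ≤ t) (htn : t < n) (σ : Fin n → Equiv.Perm (Fin n)) :
    ∃ v : ℕ → ℝ, (∀ j : ℕ, 1 ≤ j → j < n → v (j + 1) < v j) ∧
      ∃ i : Fin n,
        ∑ s ∈ Finset.univ.filter (fun s : Fin n => (s : ℕ) < t), v ((σ s i : ℕ) + 1)
          < ((t : ℝ) / (n : ℝ)) * ∑ j ∈ Finset.Icc 1 n, v j := by
  set S := univ.filter fun s : Fin n => (s : ℕ) < t
  have hS : #S = t := by rw [Fin.card_filter_val_lt, min_eq_right htn.le]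
  set q : ℝ := ((n : ℝ) + 1)⁻¹
  have hn : (0 : ℝ) < n := by exact_mod_cast (Nat.zero_lt_one.trans_le ht).trans htn
  have hq0 : 0 < q := by positivity
  have hq1 : q < 1 := inv_lt_one_of_one_lt₀ (by linarith)
  have hqn : q < (n : ℝ)⁻¹ := inv_strictAnti₀ hn (lt_add_one _)
  refine ⟨(q ^ ·), fun j _ _ => pow_lt_pow_right_of_lt_one₀ hq0 hq1 j.lt_succ_self, ?_⟩
  obtain ⟨i, hi⟩ :=
    Equiv.Perm.exists_forall_apply_ne_of_card_lt σ S (by rwa [hS, Fintype.card_fin]) ⟨0, by omega⟩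
  have hbest : ∀ s ∈ S, 1 ≤ (σ s i : ℕ) :=
    fun s hs => Nat.one_le_iff_ne_zero.mpr fun h => hi s hs (Fin.ext h)
  have htotal : q ≤ ∑ j ∈ Icc 1 n, q ^ j := by
    simpa using single_le_sum (f := (q ^ ·)) (fun j _ => (pow_pos hq0 j).le)
      (mem_Icc.mpr ⟨le_rfl, ht.trans htn.le⟩)
  refine ⟨i, ?_⟩
  calc ∑ s ∈ S, q ^ ((σ s i : ℕ) + 1) ≤ t * q ^ 2 := by
        simpa [hS] using sum_pow_succ_le_card_mul_sq hq0.le hq1.le S _ hbest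
    _ = t * q * q := by ring
    _ < t * q * (n : ℝ)⁻¹ := by gcongr
    _ = t / n * q := by ring
    _ ≤ t / n * ∑ j ∈ Icc 1 n, q ^ j := by gcongr

/-- For every `n ≥ 2` and every day `t` with `1 ≤ t < n`, no permutation sequence of
length `n` is ordinally proportional after day `t`: there is a valuation `v` with
`v 1 > v 2 > ⋯ > v n` and a player `i` whose cumulative bundle after day `t` is worth
less than `t/n` times the total value of all `n` items (item assigned on day `s` has rank
`(σ s i : ℕ) + 1`). -/
theorem not_ordinally_proportional_before_day_n (n : ℕ) (hn : 2 ≤ n)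
    (t : ℕ) (ht : 1 ≤ t) (htn : t < n) (σ : Fin n → Equiv.Perm (Fin n)) :
    ∃ v : ℕ → ℝ, (∀ j : ℕ, 1 ≤ j → j < n → v (j + 1) < v j) ∧
      ∃ i : Fin n,
        ∑ s ∈ Finset.univ.filter (fun s : Fin n => (s : ℕ) < t), v ((σ s i : ℕ) + 1)
          < ((t : ℝ) / (n : ℝ)) * ∑ j ∈ Finset.Icc 1 n, v j :=
  not_ordinally_proportional_before_day_n_general n t ht htn σ
end
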